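/- arXiv:math/0310365 — 9 statements merged into one kernel-verified Lean document; each statement's English description precedes it below -/
import Mathlib

section
/- Let x : [0,L] → ℝ³ be a C² unit-speed curve contained in the closed ball of radius ρ centered at the origin (|x(s)| ≤ ρ for all s), and let κ = ∫₀ᴸ |x''(s)| ds be its total curvature. Then L ≤ ρ(κ + 2). -/
open MeasureTheory Real Set

/-- Packing inequality: a C² unit-speed curve of length `L` contained
in the closed ball of radius `ρ` about the origin satisfies `L ≤ ρ(κ+2)`,
where `κ` is its total curvature. -/
theorem packing_inequality
    (L ρ : ℝ) (hρ : 0 < ρ) (hL : 0 ≤ L)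
    (x x' x'' : ℝ → EuclideanSpace ℝ (Fin 3))
    (hd1 : ∀ s ∈ Icc (0:ℝ) L, HasDerivWithinAt x (x' s) (Icc (0:ℝ) L) s)
    (hd2 : ∀ s ∈ Icc (0:ℝ) L, HasDerivWithinAt x' (x'' s) (Icc (0:ℝ) L) s)
    (hcont : ContinuousOn x'' (Icc (0:ℝ) L))
    (hunit : ∀ s ∈ Icc (0:ℝ) L, ‖x' s‖ = 1)
    (hball : ∀ s ∈ Icc (0:ℝ) L, ‖x s‖ ≤ ρ) :
    L ≤ ρ * ((∫ s in (0:ℝ)..L, ‖x'' s‖) + 2) := by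
  set F : ℝ → ℝ := fun s => inner ℝ (x s) (x' s) with hF
  set G : ℝ → ℝ := fun s => inner ℝ (x s) (x'' s) + 1 with hG
  have hxc : ContinuousOn x (Icc (0:ℝ) L) := fun s hs => (hd1 s hs).continuousWithinAt
  have hx'c : ContinuousOn x' (Icc (0:ℝ) L) := fun s hs => (hd2 s hs).continuousWithinAt
  have hFc : ContinuousOn F (Icc (0:ℝ) L) := by
    exact (continuous_inner.comp_continuousOn (hxc.prodMk hx'c))
  have hGc : ContinuousOn G (Icc (0:ℝ) L) := by
    exact (continuous_inner.comp_continuousOn (hxc.prodMk hcont)).add continuousOn_const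
  -- derivative of F
  have hFd : ∀ s ∈ Ioo (0:ℝ) L, HasDerivWithinAt F (G s) (Ioi s) s := by
    intro s hs
    have hs' : s ∈ Icc (0:ℝ) L := Ioo_subset_Icc_self hs
    have h := ((hd1 s hs').inner ℝ (hd2 s hs'))
    have h2 : (inner ℝ (x s) (x'' s) : ℝ) + inner ℝ (x' s) (x' s) = G s := by
      rw [real_inner_self_eq_norm_sq, hunit s hs']; simp [hG]
    rw [h2] at h
    exact h.mono_of_mem_nhdsWithin
      (Icc_mem_nhdsGT_of_mem ⟨le_of_lt hs.1, hs.2⟩)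
  have hGint : IntervalIntegrable G volume 0 L := by
    exact (hGc.mono (by rw [uIcc_of_le hL])).intervalIntegrable
  have hFTC : ∫ s in (0:ℝ)..L, G s = F L - F 0 :=
    intervalIntegral.integral_eq_sub_of_hasDeriv_right_of_le hL hFc hFd hGint
  have hinner_int : IntervalIntegrable (fun s => (inner ℝ (x s) (x'' s) : ℝ)) volume 0 L := by
    exact ((continuous_inner.comp_continuousOn (hxc.prodMk hcont)).mono
      (by rw [uIcc_of_le hL])).intervalIntegrable
  have hsplit : ∫ s in (0:ℝ)..L, G s
      = (∫ s in (0:ℝ)..L, (inner ℝ (x s) (x'' s) : ℝ)) + L := by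
    rw [hG]
    rw [intervalIntegral.integral_add hinner_int intervalIntegrable_const]
    simp
  -- bound endpoints
  have hend : ∀ s ∈ Icc (0:ℝ) L, |F s| ≤ ρ := by
    intro s hs
    calc |F s| ≤ ‖x s‖ * ‖x' s‖ := abs_real_inner_le_norm _ _
      _ ≤ ρ := by rw [hunit s hs, mul_one]; exact hball s hs
  have h0 : (0:ℝ) ∈ Icc (0:ℝ) L := ⟨le_refl _, hL⟩
  have hLmem : L ∈ Icc (0:ℝ) L := ⟨hL, le_refl _⟩
  -- bound the inner integral from below
  have hnint : IntervalIntegrable (fun s => -(ρ * ‖x'' s‖)) volume 0 L := by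
    exact (((continuousOn_const.mul hcont.norm).neg).mono (by rw [uIcc_of_le hL])).intervalIntegrable
  have hlow : ∫ s in (0:ℝ)..L, -(ρ * ‖x'' s‖)
      ≤ ∫ s in (0:ℝ)..L, (inner ℝ (x s) (x'' s) : ℝ) := by
    apply intervalIntegral.integral_mono_on hL hnint hinner_int
    intro s hs
    have h1 : |(inner ℝ (x s) (x'' s) : ℝ)| ≤ ρ * ‖x'' s‖ := by
      calc |(inner ℝ (x s) (x'' s) : ℝ)| ≤ ‖x s‖ * ‖x'' s‖ := abs_real_inner_le_norm _ _
        _ ≤ ρ * ‖x'' s‖ := by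
          apply mul_le_mul_of_nonneg_right (hball s hs) (norm_nonneg _)
    linarith [neg_abs_le (inner ℝ (x s) (x'' s) : ℝ)]
  have hnorm_int : IntervalIntegrable (fun s => ‖x'' s‖) volume 0 L := by
    exact (hcont.norm.mono (by rw [uIcc_of_le hL])).intervalIntegrable
  have hneg : ∫ s in (0:ℝ)..L, -(ρ * ‖x'' s‖)
      = -(ρ * ∫ s in (0:ℝ)..L, ‖x'' s‖) := by
    rw [intervalIntegral.integral_neg, intervalIntegral.integral_const_mul]
  -- combine
  have key : L = F L - F 0 - ∫ s in (0:ℝ)..L, (inner ℝ (x s) (x'' s) : ℝ) := by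
    rw [← hFTC, hsplit]; ring
  have hFL := abs_le.mp (hend L hLmem)
  have hF0 := abs_le.mp (hend 0 h0)
  rw [hneg] at hlow
  nlinarith [hFL.1, hFL.2, hF0.1, hF0.2, hlow, key]
end

section
/- Let x : [0,L] → ℝ³ be a C² unit-speed curve contained in a closed ball of radius ρ > 0, with total curvature κ = ∫₀ᴸ |x''(s)| ds. If L ≥ 3ρ then κ ≥ 1. -/
open MeasureTheory Real Set

/-- If a C² unit-speed curve of length `L ≥ 3ρ` is contained in a closed ball
of radius `ρ > 0`, then its total curvature is at least `1`. -/
theorem packing_curvature_ge_one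
    (L ρ : ℝ) (hρ : 0 < ρ) (hL : 0 ≤ L)
    (c : EuclideanSpace ℝ (Fin 3))
    (x x' x'' : ℝ → EuclideanSpace ℝ (Fin 3))
    (hd1 : ∀ s ∈ Icc (0:ℝ) L, HasDerivWithinAt x (x' s) (Icc (0:ℝ) L) s)
    (hd2 : ∀ s ∈ Icc (0:ℝ) L, HasDerivWithinAt x' (x'' s) (Icc (0:ℝ) L) s)
    (hcont : ContinuousOn x'' (Icc (0:ℝ) L))
    (hunit : ∀ s ∈ Icc (0:ℝ) L, ‖x' s‖ = 1)
    (hball : ∀ s ∈ Icc (0:ℝ) L, ‖x s - c‖ ≤ ρ)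
    (hlong : 3 * ρ ≤ L) :
    1 ≤ ∫ s in (0:ℝ)..L, ‖x'' s‖ := by
  have hL0 : (0:ℝ) < L := lt_of_lt_of_le (by linarith) hlong
  set g : ℝ → ℝ := fun s => inner ℝ (x s - c) (x' s) with hg
  set g' : ℝ → ℝ :=
    fun s => inner ℝ (x s - c) (x'' s) + inner ℝ (x' s) (x' s) with hg'
  -- derivative of g
  have hdg : ∀ s ∈ Icc (0:ℝ) L, HasDerivWithinAt g (g' s) (Icc (0:ℝ) L) s := by
    intro s hs
    simpa [hg, hg'] using
      (((hd1 s hs).sub_const c).inner ℝ (hd2 s hs))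
  -- continuity facts
  have hcx : ContinuousOn x (Icc (0:ℝ) L) := fun s hs => (hd1 s hs).continuousWithinAt
  have hcx' : ContinuousOn x' (Icc (0:ℝ) L) := fun s hs => (hd2 s hs).continuousWithinAt
  have hcg : ContinuousOn g (Icc (0:ℝ) L) :=
    (hcx.sub continuousOn_const).inner hcx'
  have hcg' : ContinuousOn g' (Icc (0:ℝ) L) :=
    ((hcx.sub continuousOn_const).inner hcont).add (hcx'.inner hcx')
  have hint : IntervalIntegrable g' volume 0 L :=
    (hcg'.mono (by rw [uIcc_of_le hL0.le])).intervalIntegrable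
  -- FTC
  have hftc : ∫ s in (0:ℝ)..L, g' s = g L - g 0 := by
    apply intervalIntegral.integral_eq_sub_of_hasDeriv_right_of_le hL0.le hcg _ hint
    intro s hs
    exact ((hdg s (Ioo_subset_Icc_self hs)).hasDerivAt
      (Icc_mem_nhds hs.1 hs.2)).hasDerivWithinAt
  -- pointwise lower bound for g'
  have hptwise : ∀ s ∈ Icc (0:ℝ) L, 1 - ρ * ‖x'' s‖ ≤ g' s := by
    intro s hs
    have h1 : inner ℝ (x' s) (x' s) = (1:ℝ) := by
      rw [real_inner_self_eq_norm_sq, hunit s hs]; norm_num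
    have h2 : -(ρ * ‖x'' s‖) ≤ inner ℝ (x s - c) (x'' s) := by
      have := abs_real_inner_le_norm (x s - c) (x'' s)
      have hb := hball s hs
      nlinarith [norm_nonneg (x'' s), abs_nonneg (inner ℝ (x s - c) (x'' s) : ℝ),
        neg_abs_le (inner ℝ (x s - c) (x'' s) : ℝ)]
    simp only [hg', h1]
    linarith
  -- integral comparison
  have hintLB : L - ρ * ∫ s in (0:ℝ)..L, ‖x'' s‖ ≤ ∫ s in (0:ℝ)..L, g' s := by
    have hi1 : IntervalIntegrable (fun s => 1 - ρ * ‖x'' s‖) volume 0 L := by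
      apply ContinuousOn.intervalIntegrable
      apply ContinuousOn.sub continuousOn_const
      exact ContinuousOn.mul continuousOn_const
        ((hcont.mono (by rw [uIcc_of_le hL0.le])).norm)
    have := intervalIntegral.integral_mono_on hL0.le hi1 hint
      (fun s hs => hptwise s hs)
    calc L - ρ * ∫ s in (0:ℝ)..L, ‖x'' s‖
        = ∫ s in (0:ℝ)..L, (1 - ρ * ‖x'' s‖) := by
          have hi2 : IntervalIntegrable (fun s => ρ * ‖x'' s‖) volume 0 L :=
            (ContinuousOn.mul continuousOn_const
              ((hcont.mono (by rw [uIcc_of_le hL0.le])).norm)).intervalIntegrable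
          rw [intervalIntegral.integral_sub intervalIntegrable_const hi2]
          simp [intervalIntegral.integral_const_mul]
      _ ≤ ∫ s in (0:ℝ)..L, g' s := this
  -- bounds on g at endpoints
  have hgb : ∀ s ∈ Icc (0:ℝ) L, |g s| ≤ ρ := by
    intro s hs
    calc |g s| ≤ ‖x s - c‖ * ‖x' s‖ := abs_real_inner_le_norm _ _
      _ ≤ ρ * 1 := by
          rw [hunit s hs]
          exact mul_le_mul_of_nonneg_right (hball s hs) zero_le_one
      _ = ρ := mul_one ρ
  have hb0 := hgb 0 ⟨le_refl 0, hL0.le⟩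
  have hbL := hgb L ⟨hL0.le, le_refl L⟩
  rw [abs_le] at hb0 hbL
  have key : L - ρ * ∫ s in (0:ℝ)..L, ‖x'' s‖ ≤ 2 * ρ := by
    rw [hftc] at hintLB; linarith
  have : ρ * 1 ≤ ρ * ∫ s in (0:ℝ)..L, ‖x'' s‖ := by linarith
  exact le_of_mul_le_mul_left this hρ
end

section
/- Let x : [0,L] → ℝ³ be a C² unit-speed closed curve (x(0) = x(L), x'(0) = x'(L)) contained in a closed ball of radius ρ centered at the origin. Then L ≤ ρ · ∫₀ᴸ |x''(s)| ds. -/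
open MeasureTheory Real Set

/-- Packing inequality for closed curves: a C² unit-speed closed curve of
length `L` contained in the closed ball of radius `ρ` about the origin
satisfies `L ≤ ρ·κ`, where `κ` is its total curvature. -/
theorem packing_inequality_closed
    (L ρ : ℝ) (hρ : 0 < ρ) (hL : 0 ≤ L)
    (x x' x'' : ℝ → EuclideanSpace ℝ (Fin 3))
    (hd1 : ∀ s ∈ Icc (0:ℝ) L, HasDerivWithinAt x (x' s) (Icc (0:ℝ) L) s)
    (hd2 : ∀ s ∈ Icc (0:ℝ) L, HasDerivWithinAt x' (x'' s) (Icc (0:ℝ) L) s)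
    (hcont : ContinuousOn x'' (Icc (0:ℝ) L))
    (hunit : ∀ s ∈ Icc (0:ℝ) L, ‖x' s‖ = 1)
    (hclosed : x 0 = x L) (hclosed' : x' 0 = x' L)
    (hball : ∀ s ∈ Icc (0:ℝ) L, ‖x s‖ ≤ ρ) :
    L ≤ ρ * ∫ s in (0:ℝ)..L, ‖x'' s‖ := by
  have hcx : ContinuousOn x (Icc (0:ℝ) L) := fun s hs => (hd1 s hs).continuousWithinAt
  have hcx' : ContinuousOn x' (Icc (0:ℝ) L) := fun s hs => (hd2 s hs).continuousWithinAt
  set g : ℝ → ℝ := fun s => inner ℝ (x s) (x'' s) with hg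
  have hcg : ContinuousOn g (Icc (0:ℝ) L) := hcx.inner hcont
  have hgi : IntervalIntegrable g volume 0 L := by
    apply ContinuousOn.intervalIntegrable
    rwa [uIcc_of_le hL]
  have hni : IntervalIntegrable (fun s => ‖x'' s‖) volume 0 L := by
    apply ContinuousOn.intervalIntegrable
    rw [uIcc_of_le hL]; exact hcont.norm
  -- f(s) = ⟪x s, x' s⟫, f' = 1 + g
  set f : ℝ → ℝ := fun s => inner ℝ (x s) (x' s) with hf
  have hderiv : ∀ s ∈ Ioo (0:ℝ) L, HasDerivWithinAt f (1 + g s) (Ioi s) s := by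
    intro s hs
    have hsm : s ∈ Icc (0:ℝ) L := Ioo_subset_Icc_self hs
    have h1 : HasDerivAt x (x' s) s :=
      (hd1 s hsm).hasDerivAt (Icc_mem_nhds hs.1 hs.2)
    have h2 : HasDerivAt x' (x'' s) s :=
      (hd2 s hsm).hasDerivAt (Icc_mem_nhds hs.1 hs.2)
    have := h1.inner (𝕜 := ℝ) h2
    have hu : (inner ℝ (x s) (x'' s) + inner ℝ (x' s) (x' s) : ℝ) = 1 + g s := by
      rw [real_inner_self_eq_norm_sq, hunit s hsm]
      ring
    rw [hu] at this
    exact this.hasDerivWithinAt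
  have hcf : ContinuousOn f (Icc (0:ℝ) L) := hcx.inner hcx'
  have hfint : IntervalIntegrable (fun s => 1 + g s) volume 0 L :=
    (intervalIntegrable_const (c := (1:ℝ))).add hgi
  have hftc : ∫ s in (0:ℝ)..L, (1 + g s) = f L - f 0 :=
    intervalIntegral.integral_eq_sub_of_hasDeriv_right_of_le hL hcf hderiv hfint
  have hf0 : f L - f 0 = 0 := by simp [hf, hclosed, hclosed']
  have hsplit : ∫ s in (0:ℝ)..L, (1 + g s)
      = L + ∫ s in (0:ℝ)..L, g s := by
    rw [intervalIntegral.integral_add (intervalIntegrable_const) hgi]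
    simp
  have hkey : L = -∫ s in (0:ℝ)..L, g s := by
    have := hftc
    rw [hsplit, hf0] at this
    linarith
  have hmono : ∫ s in (0:ℝ)..L, (-g s) ≤ ∫ s in (0:ℝ)..L, ρ * ‖x'' s‖ := by
    apply intervalIntegral.integral_mono_on hL hgi.neg (hni.const_mul ρ)
    intro s hs
    have h1 : |g s| ≤ ‖x s‖ * ‖x'' s‖ := abs_real_inner_le_norm _ _
    have h2 : ‖x s‖ * ‖x'' s‖ ≤ ρ * ‖x'' s‖ :=
      mul_le_mul_of_nonneg_right (hball s hs) (norm_nonneg _)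
    have := neg_abs_le (g s)
    show -g s ≤ ρ * ‖x'' s‖
    linarith
  have hneg : -∫ s in (0:ℝ)..L, g s = ∫ s in (0:ℝ)..L, (-g s) :=
    (intervalIntegral.integral_neg).symm
  have hmul : ∫ s in (0:ℝ)..L, ρ * ‖x'' s‖ = ρ * ∫ s in (0:ℝ)..L, ‖x'' s‖ :=
    intervalIntegral.integral_const_mul ρ _
  linarith
end

section
/- For all real t with 0 < t ≤ 1/√3 (equivalently corresponding to a ≥ 2 via t = 1/√(a+1)), we have π − 2·arcsin(1 − t²) > 2√2 · t. -/
open Real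

/-- Analytic core of the oscillation lemma: for `0 < t ≤ 1/√3`,
`π − 2·arcsin(1 − t²) > 2√2·t`. -/
theorem arcsin_oscillation_ineq (t : ℝ) (ht : 0 < t) (ht' : t ≤ 1 / Real.sqrt 3) :
    π - 2 * Real.arcsin (1 - t ^ 2) > 2 * Real.sqrt 2 * t := by
  have h3 : (0:ℝ) < Real.sqrt 3 := Real.sqrt_pos.mpr (by norm_num)
  have ht1 : t ≤ 1 := ht'.trans (by
    rw [div_le_one h3]
    nlinarith [Real.sq_sqrt (by norm_num : (3:ℝ) ≥ 0), Real.sqrt_nonneg 3])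
  have ht2 : t ^ 2 ≤ 1 / 3 := by
    have := Real.sq_sqrt (by norm_num : (3:ℝ) ≥ 0)
    have h := mul_self_le_mul_self ht.le ht'
    rw [div_mul_div_comm, one_mul, Real.mul_self_sqrt (by norm_num : (3:ℝ) ≥ 0)] at h
    nlinarith
  set x := Real.sqrt 2 * t with hxdef
  have h2 : (0:ℝ) < Real.sqrt 2 := Real.sqrt_pos.mpr (by norm_num)
  have hx0 : 0 < x := mul_pos h2 ht
  have hxsq : x ^ 2 = 2 * t ^ 2 := by
    rw [hxdef, mul_pow, Real.sq_sqrt (by norm_num : (2:ℝ) ≥ 0)]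
  have hxle : x ≤ π := by
    have : x ≤ 2 := by
      have hs2 : Real.sqrt 2 ≤ 2 := by
        nlinarith [Real.sq_sqrt (by norm_num : (2:ℝ) ≥ 0), Real.sqrt_nonneg 2]
      nlinarith
    linarith [Real.pi_gt_three]
  have hcos : 1 - t ^ 2 < Real.cos x := by
    have := Real.one_sub_sq_div_two_lt_cos (x := x) (ne_of_gt hx0)
    rw [hxsq] at this; linarith
  have hmem1 : (1 - t ^ 2) ∈ Set.Icc (-1:ℝ) 1 := by
    constructor <;> nlinarith
  have hmem2 : Real.cos x ∈ Set.Icc (-1:ℝ) 1 := ⟨Real.neg_one_le_cos x, Real.cos_le_one x⟩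
  have harccos : Real.arccos (Real.cos x) < Real.arccos (1 - t ^ 2) :=
    Real.strictAntiOn_arccos hmem1 hmem2 hcos
  rw [Real.arccos_cos hx0.le hxle] at harccos
  rw [Real.arccos] at harccos
  rw [hxdef] at harccos
  linarith
end

section
/- Let A be a C² curve in ℝ³ parametrized over [0,L], whose endpoints both lie on the sphere of radius a > 0 centered at the origin, and which contains a point at distance b from the origin, where b ≥ a + 1 and a ≥ 2. Then the total curvature of A satisfies κ(A) > 2/√a. -/
open MeasureTheory Real Set
open scoped RealInnerProductSpace

set_option maxHeartbeats 1000000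

private lemma osc_alg (a m T G Q c : ℝ) (ha : 2 ≤ a) (hm : a + 1 ≤ m)
    (hT : 0 ≤ T) (hc : 0 < c) (hca : c^2 * a = 1)
    (hG : m - c * T ≤ G)
    (hQ : (1 - c^2/2) * T ≤ Q) (hGQ : G^2 + Q^2 ≤ a^2) : False := by
  have ha0 : (0:ℝ) < a := by linarith
  have ha0' : a ≠ 0 := ne_of_gt ha0
  have hc2 : c^2 = 1/a := by field_simp at hca ⊢; linarith
  have hc2le : c^2 ≤ 1/2 := by rw [hc2]; rw [div_le_div_iff₀ ha0 (by norm_num)]; linarith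
  have hc2pos : 0 < c^2 := by positivity
  have hQ0 : 0 ≤ (1 - c^2/2) * T := by nlinarith
  have hQsq : (2 - c^2)^2 * T^2 ≤ 4 * Q^2 := by nlinarith
  have hm2 : (a+1)^2 ≤ m^2 := by nlinarith
  rcases le_or_gt (c*T) m with h | h
  · have hGsq : (m - c*T)^2 ≤ G^2 := by nlinarith
    have h5 : 4*(m - c*T)^2 + (2 - c^2)^2 * T^2 ≤ 4*a^2 := by nlinarith
    have hA : (0:ℝ) ≤ 4*c^2 + (2 - c^2)^2 := by positivity
    have h3 : (4*c^2 + (2 - c^2)^2) * (m^2 - a^2) ≤ 4*m^2*c^2 := by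
      nlinarith [sq_nonneg ((4*c^2 + (2-c^2)^2)*T - 4*m*c), mul_le_mul_of_nonneg_left h5 hA]
    rw [hc2] at h3
    field_simp at h3
    have h3' : (4*a^2+1)*(m^2-a^2) ≤ 4*m^2*a := by nlinarith [h3]
    nlinarith [mul_le_mul_of_nonneg_left hm2 (sq_nonneg (2*a-1)), sq_nonneg a]
  · have hQa : Q^2 ≤ a^2 := by nlinarith [sq_nonneg G]
    have hTm : m^2 < c^2 * T^2 := by nlinarith
    have h6 : (2 - c^2)^2 * m^2 < 4*a^2*c^2 := by
      have hd : (0:ℝ) < (2-c^2)^2 := by nlinarith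
      nlinarith [mul_lt_mul_of_pos_left hTm hd]
    rw [hc2] at h6
    field_simp at h6
    have h6' : (2*a-1)^2 * m^2 < 4*a^2*a := by nlinarith [h6]
    nlinarith [mul_le_mul_of_nonneg_left hm2 (sq_nonneg (2*a-1)), sq_nonneg a]

private lemma osc_half (L a b t : ℝ) (ha : 2 ≤ a) (hb : a + 1 ≤ b)
    (x x' x'' : ℝ → EuclideanSpace ℝ (Fin 3))
    (hd1 : ∀ s ∈ Icc (0:ℝ) L, HasDerivWithinAt x (x' s) (Icc (0:ℝ) L) s)
    (hd2 : ∀ s ∈ Icc (0:ℝ) L, HasDerivWithinAt x' (x'' s) (Icc (0:ℝ) L) s)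
    (hcont : ContinuousOn x'' (Icc (0:ℝ) L))
    (hunit : ∀ s ∈ Icc (0:ℝ) L, ‖x' s‖ = 1)
    (hstart : ‖x 0‖ = a)
    (ht : t ∈ Icc (0:ℝ) L) (hbt : b ≤ ‖x t‖)
    (horth : ⟪x t, x' t⟫ = 0) :
    1 / Real.sqrt a < ∫ s in (0:ℝ)..t, ‖x'' s‖ := by
  have ha0 : (0:ℝ) < a := by linarith
  have hsq : Real.sqrt a > 0 := Real.sqrt_pos.mpr ha0
  set c : ℝ := 1 / Real.sqrt a with hcdef
  have hc : 0 < c := by positivity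
  have hca : c^2 * a = 1 := by
    rw [hcdef, div_pow, one_pow, Real.sq_sqrt ha0.le]
    field_simp
  by_contra hK
  push_neg at hK
  -- hK : ∫ s in 0..t, ‖x'' s‖ ≤ c
  obtain ⟨ht0, htL⟩ := ht
  have hsub : Icc (0:ℝ) t ⊆ Icc (0:ℝ) L := Icc_subset_Icc le_rfl htL
  set m : ℝ := ‖x t‖ with hmdef
  have hm : a + 1 ≤ m := le_trans hb hbt
  have hm0 : 0 < m := by linarith
  set v : EuclideanSpace ℝ (Fin 3) := x' t with hvdef
  set u : EuclideanSpace ℝ (Fin 3) := m⁻¹ • x t with hudef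
  have hv : ‖v‖ = 1 := hunit t ⟨ht0, htL⟩
  have hu : ‖u‖ = 1 := by
    rw [hudef, norm_smul, norm_inv, Real.norm_eq_abs, abs_of_pos hm0, ← hmdef]
    field_simp
  have huv : ⟪u, v⟫ = 0 := by
    rw [hudef, real_inner_smul_left, horth, mul_zero]
  have hvu : ⟪v, u⟫ = 0 := by rw [real_inner_comm]; exact huv
  have hxtu : ⟪x t, u⟫ = m := by
    rw [hudef, real_inner_smul_right, real_inner_self_eq_norm_sq, ← hmdef]
    field_simp
  have hxtv : ⟪x t, v⟫ = 0 := horth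
  clear_value u v m
  have hcontx' : ContinuousOn x' (Icc (0:ℝ) L) := fun s hs => (hd2 s hs).continuousWithinAt
  have hcontx : ContinuousOn x (Icc (0:ℝ) L) := fun s hs => (hd1 s hs).continuousWithinAt
  have hnormint : IntervalIntegrable (fun s => ‖x'' s‖) volume 0 t :=
    ((hcont.mono hsub).norm.intervalIntegrable_of_Icc ht0)
  -- tangent vectors stay close to v
  have he : ∀ s ∈ Icc (0:ℝ) t, ‖x' s - v‖ ≤ c := by
    intro s hs
    obtain ⟨hs0, hst⟩ := hs
    have hsL : s ∈ Icc (0:ℝ) L := hsub ⟨hs0, hst⟩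
    have hftc : (∫ r in s..t, x'' r) = x' t - x' s := by
      apply intervalIntegral.integral_eq_sub_of_hasDeriv_right_of_le hst
        (hcontx'.mono (Icc_subset_Icc hs0 htL))
      · intro r hr
        have hrL : r ∈ Icc (0:ℝ) L := ⟨le_of_lt (lt_of_le_of_lt hs0 hr.1),
          le_trans hr.2.le htL⟩
        have : r ∈ Ioo (0:ℝ) L ∨ True := Or.inr trivial
        exact ((hd2 r hrL).mono_of_mem_nhdsWithin
          (mem_nhdsWithin_of_mem_nhds (Icc_mem_nhds
            (lt_of_le_of_lt hs0 hr.1) (lt_of_lt_of_le hr.2 htL))))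
      · exact (hcont.mono (Icc_subset_Icc hs0 htL)).intervalIntegrable_of_Icc hst
    have h1 : ‖x' s - v‖ = ‖∫ r in s..t, x'' r‖ := by
      rw [hftc, hvdef]; rw [norm_sub_rev]
    rw [h1]
    calc ‖∫ r in s..t, x'' r‖ ≤ ∫ r in s..t, ‖x'' r‖ :=
          intervalIntegral.norm_integral_le_integral_norm hst
      _ ≤ ∫ r in (0:ℝ)..t, ‖x'' r‖ := by
          apply intervalIntegral.integral_mono_interval hs0 hst le_rfl
          · filter_upwards with r using norm_nonneg _
          · exact hnormint
      _ ≤ c := hK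
  -- inner product bounds
  have hxv : ∀ s ∈ Icc (0:ℝ) t, 1 - c^2/2 ≤ ⟪x' s, v⟫ := by
    intro s hs
    have h1 : ‖x' s - v‖^2 ≤ c^2 := by
      have := he s hs
      nlinarith [norm_nonneg (x' s - v)]
    have h2 : ‖x' s - v‖^2 = ‖x' s‖^2 - 2 * ⟪x' s, v⟫ + ‖v‖^2 := by
      rw [@norm_sub_sq_real]
    rw [hunit s (hsub hs), hv] at h2
    nlinarith
  have hxu : ∀ s ∈ Icc (0:ℝ) t, ⟪x' s, u⟫ ≤ c := by
    intro s hs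
    have h1 : ⟪x' s, u⟫ = ⟪x' s - v, u⟫ + ⟪v, u⟫ := by
      rw [inner_sub_left]; ring
    rw [h1, hvu, add_zero]
    calc ⟪x' s - v, u⟫ ≤ ‖x' s - v‖ * ‖u‖ := real_inner_le_norm _ _
      _ = ‖x' s - v‖ := by rw [hu, mul_one]
      _ ≤ c := he s hs
  -- FTC for the two linear functionals
  have hcontx't : ContinuousOn x' (Icc (0:ℝ) t) := hcontx'.mono hsub
  have ftc_lin : ∀ w : EuclideanSpace ℝ (Fin 3),
      (∫ s in (0:ℝ)..t, ⟪x' s, w⟫) = ⟪x t, w⟫ - ⟪x 0, w⟫ := by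
    intro w
    apply intervalIntegral.integral_eq_sub_of_hasDeriv_right_of_le ht0
    · exact (hcontx.mono hsub).inner continuousOn_const
    · intro r hr
      have hrL : r ∈ Icc (0:ℝ) L := ⟨hr.1.le, le_trans hr.2.le htL⟩
      have hder : HasDerivWithinAt (fun s => ⟪x s, w⟫) (⟪x r, (0:EuclideanSpace ℝ (Fin 3))⟫ + ⟪x' r, w⟫) (Icc (0:ℝ) L) r :=
        (hd1 r hrL).inner (𝕜 := ℝ) (hasDerivWithinAt_const r _ w)
      simp only [inner_zero_right, zero_add] at hder
      exact hder.mono_of_mem_nhdsWithin (mem_nhdsWithin_of_mem_nhds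
        (Icc_mem_nhds hr.1 (lt_of_lt_of_le hr.2 htL)))
    · exact (hcontx't.inner continuousOn_const).intervalIntegrable_of_Icc ht0
  -- bound for g = ⟪x ·, u⟫
  have hGbound : m - c * t ≤ ⟪x 0, u⟫ := by
    have h1 : (∫ s in (0:ℝ)..t, ⟪x' s, u⟫) = ⟪x t, u⟫ - ⟪x 0, u⟫ := ftc_lin u
    have h2 : (∫ s in (0:ℝ)..t, ⟪x' s, u⟫) ≤ ∫ s in (0:ℝ)..t, c := by
      apply intervalIntegral.integral_mono_on ht0
        ((hcontx't.inner continuousOn_const).intervalIntegrable_of_Icc ht0)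
        intervalIntegrable_const hxu
    rw [intervalIntegral.integral_const, smul_eq_mul, sub_zero] at h2
    rw [h1, hxtu] at h2
    linarith [h2]
  -- bound for φ = ⟪x ·, v⟫
  have hQbound : (1 - c^2/2) * t ≤ -⟪x 0, v⟫ := by
    have h1 : (∫ s in (0:ℝ)..t, ⟪x' s, v⟫) = ⟪x t, v⟫ - ⟪x 0, v⟫ := ftc_lin v
    have h2 : (∫ s in (0:ℝ)..t, (1 - c^2/2)) ≤ ∫ s in (0:ℝ)..t, ⟪x' s, v⟫ := by
      apply intervalIntegral.integral_mono_on ht0 intervalIntegrable_const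
        ((hcontx't.inner continuousOn_const).intervalIntegrable_of_Icc ht0) hxv
    rw [intervalIntegral.integral_const, smul_eq_mul, sub_zero] at h2
    rw [h1, hxtv] at h2
    linarith [h2]
  -- Bessel inequality for orthonormal pair u, v
  have hbessel : ⟪x 0, u⟫^2 + (-⟪x 0, v⟫)^2 ≤ a^2 := by
    set G := ⟪x 0, u⟫
    set P := ⟪x 0, v⟫
    have e2 : ⟪x 0, G • u + P • v⟫ = G^2 + P^2 := by
      rw [inner_add_right, real_inner_smul_right, real_inner_smul_right]
      ring
    have e3 : ‖G • u + P • v‖^2 = G^2 + P^2 := by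
      rw [@norm_add_sq_real, real_inner_smul_left, real_inner_smul_right, huv,
        norm_smul, norm_smul, hu, hv]
      simp [Real.norm_eq_abs, sq_abs]
    have hexp : ‖x 0 - (G • u + P • v)‖^2
        = ‖x 0‖^2 - (G^2 + P^2) := by
      rw [@norm_sub_sq_real, e2, e3]
      ring
    have h1 : 0 ≤ ‖x 0 - (G • u + P • v)‖^2 := sq_nonneg _
    rw [hexp, hstart] at h1
    nlinarith
  exact osc_alg a m t (⟪x 0, u⟫) (-⟪x 0, v⟫) c ha hm ht0 hc hca hGbound hQbound hbessel

/-- Oscillation and curvature: a C² unit-speed curve whose endpoints lie on the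
sphere of radius `a ≥ 2` about the origin and which reaches distance `b ≥ a+1`
from the origin has total curvature greater than `2/√a`. -/
theorem oscillation_curvature
    (L a b : ℝ) (hL : 0 ≤ L) (ha : 2 ≤ a) (hb : a + 1 ≤ b)
    (x x' x'' : ℝ → EuclideanSpace ℝ (Fin 3))
    (hd1 : ∀ s ∈ Icc (0:ℝ) L, HasDerivWithinAt x (x' s) (Icc (0:ℝ) L) s)
    (hd2 : ∀ s ∈ Icc (0:ℝ) L, HasDerivWithinAt x' (x'' s) (Icc (0:ℝ) L) s)
    (hcont : ContinuousOn x'' (Icc (0:ℝ) L))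
    (hunit : ∀ s ∈ Icc (0:ℝ) L, ‖x' s‖ = 1)
    (hstart : ‖x 0‖ = a) (hend : ‖x L‖ = a)
    (hreach : ∃ t ∈ Icc (0:ℝ) L, ‖x t‖ = b) :
    (∫ s in (0:ℝ)..L, ‖x'' s‖) > 2 / Real.sqrt a := by
  have ha0 : (0:ℝ) < a := by linarith
  have hcontx : ContinuousOn x (Icc (0:ℝ) L) := fun s hs => (hd1 s hs).continuousWithinAt
  obtain ⟨t, htmem, hmax⟩ := isCompact_Icc.exists_isMaxOn (nonempty_Icc.mpr hL)
    hcontx.norm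
  obtain ⟨r, hrmem, hrb⟩ := hreach
  have hbt : b ≤ ‖x t‖ := hrb ▸ hmax hrmem
  have ht0 : 0 < t := by
    rcases lt_or_eq_of_le htmem.1 with h | h
    · exact h
    · exfalso; rw [← h] at hbt; rw [hstart] at hbt; linarith
  have htL : t < L := by
    rcases lt_or_eq_of_le htmem.2 with h | h
    · exact h
    · exfalso; rw [h] at hbt; rw [hend] at hbt; linarith
  -- orthogonality at the max
  have horth : ⟪x t, x' t⟫ = 0 := by
    have hnhds : Icc (0:ℝ) L ∈ nhds t := Icc_mem_nhds ht0 htL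
    have hder : HasDerivAt x (x' t) t := (hd1 t htmem).hasDerivAt hnhds
    have hder2 : HasDerivAt (fun s => ⟪x s, x s⟫) (⟪x t, x' t⟫ + ⟪x' t, x t⟫) t :=
      hder.inner (𝕜 := ℝ) hder
    have hlocmax : IsLocalMax (fun s => ⟪x s, x s⟫) t := by
      filter_upwards [hnhds] with s hs
      have h1 : ‖x s‖ ≤ ‖x t‖ := hmax hs
      simp only [real_inner_self_eq_norm_sq]
      nlinarith [norm_nonneg (x s), norm_nonneg (x t)]
    have hz := hlocmax.hasDerivAt_eq_zero hder2
    rw [real_inner_comm (x t) (x' t)] at hz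
    linarith
  have htmem' : t ∈ Icc (0:ℝ) L := htmem
  -- first half
  have h1 : 1 / Real.sqrt a < ∫ s in (0:ℝ)..t, ‖x'' s‖ :=
    osc_half L a b t ha hb x x' x'' hd1 hd2 hcont hunit hstart htmem hbt horth
  -- second half: reverse the curve
  have h2 : 1 / Real.sqrt a < ∫ s in t..L, ‖x'' s‖ := by
    set y : ℝ → EuclideanSpace ℝ (Fin 3) := fun s => x (L - s) with hy
    set y' : ℝ → EuclideanSpace ℝ (Fin 3) := fun s => (-1 : ℝ) • x' (L - s) with hy'
    set y'' : ℝ → EuclideanSpace ℝ (Fin 3) := fun s => x'' (L - s) with hy''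
    have hmaps : MapsTo (fun s : ℝ => L - s) (Icc (0:ℝ) L) (Icc (0:ℝ) L) := by
      intro s hs
      have hs' := mem_Icc.mp hs
      show L - s ∈ Icc 0 L
      exact mem_Icc.mpr ⟨by linarith [hs'.2], by linarith [hs'.1]⟩
    have hrefl : ∀ s ∈ Icc (0:ℝ) L, HasDerivWithinAt (fun σ : ℝ => L - σ) (-1 : ℝ)
        (Icc (0:ℝ) L) s := by
      intro s hs
      simpa using ((hasDerivWithinAt_id s _).const_sub L)
    have hd1y : ∀ s ∈ Icc (0:ℝ) L, HasDerivWithinAt y (y' s) (Icc (0:ℝ) L) s := by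
      intro s hs
      exact (hd1 (L - s) (hmaps hs)).scomp s (hrefl s hs) hmaps
    have hd2y : ∀ s ∈ Icc (0:ℝ) L, HasDerivWithinAt y' (y'' s) (Icc (0:ℝ) L) s := by
      intro s hs
      have := ((hd2 (L - s) (hmaps hs)).scomp s (hrefl s hs) hmaps).const_smul (-1 : ℝ)
      have h'' : y'' s = (-1:ℝ) • (-1:ℝ) • x'' (L - s) := by simp [hy'']
      rw [h'']; exact this
    have hconty : ContinuousOn y'' (Icc (0:ℝ) L) := by
      apply hcont.comp (by fun_prop) hmaps
    have hunity : ∀ s ∈ Icc (0:ℝ) L, ‖y' s‖ = 1 := by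
      intro s hs
      rw [hy']
      simp only [norm_smul, norm_neg, norm_one]
      simpa using hunit (L - s) (hmaps hs)
    have hstarty : ‖y 0‖ = a := by simp [hy, hend]
    have htymem : L - t ∈ Icc (0:ℝ) L := hmaps htmem
    have hbty : b ≤ ‖y (L - t)‖ := by
      rw [hy]; simpa using hbt
    have horthy : ⟪y (L - t), y' (L - t)⟫ = 0 := by
      rw [hy, hy']
      simp only [sub_sub_cancel]
      rw [real_inner_smul_right, horth, mul_zero]
    have hh := osc_half L a b (L - t) ha hb y y' y'' hd1y hd2y hconty hunity
      hstarty htymem hbty horthy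
    have heq : (∫ s in (0:ℝ)..(L - t), ‖y'' s‖) = ∫ s in t..L, ‖x'' s‖ := by
      have := intervalIntegral.integral_comp_sub_left (a := (0:ℝ)) (b := L - t)
        (fun r => ‖x'' r‖) L
      simpa [hy''] using this
    rwa [heq] at hh
  -- combine
  have hsplit : (∫ s in (0:ℝ)..L, ‖x'' s‖)
      = (∫ s in (0:ℝ)..t, ‖x'' s‖) + ∫ s in t..L, ‖x'' s‖ := by
    rw [intervalIntegral.integral_add_adjacent_intervals]
    · exact ((hcont.mono (Icc_subset_Icc le_rfl htmem.2)).norm.intervalIntegrable_of_Icc ht0.le)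
    · exact IntervalIntegrable.mono_set
        ((hcont.norm.intervalIntegrable_of_Icc hL)) (by
          rw [uIcc_of_le htmem.2, uIcc_of_le hL]
          exact Icc_subset_Icc htmem.1 le_rfl)
  have : 2 / Real.sqrt a = 1 / Real.sqrt a + 1 / Real.sqrt a := by ring
  rw [hsplit, this]
  exact add_lt_add h1 h2
end

section
/- Let Y be a C² unit-speed curve y : [0,L] → ℝ³ with |y(0) − x₀| = 2, such that s ↦ |y(s) − x₀| is monotone increasing. If κ denotes the total curvature of Y, then ∫₀ᴸ 1/|y(s) − x₀|² ds < 2κ + 3. -/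
open MeasureTheory Real Set Topology Filter

/-- Monotone case of the illumination lemma: if a C² unit-speed curve starts at
distance `2` from `x₀` and its distance to `x₀` is monotone increasing, then
its illumination of `x₀` is less than `2κ + 3`. -/
theorem illumination_monotone
    (L : ℝ) (hL : 0 ≤ L) (x₀ : EuclideanSpace ℝ (Fin 3))
    (y y' y'' : ℝ → EuclideanSpace ℝ (Fin 3))
    (hd1 : ∀ s ∈ Icc (0:ℝ) L, HasDerivWithinAt y (y' s) (Icc (0:ℝ) L) s)
    (hd2 : ∀ s ∈ Icc (0:ℝ) L, HasDerivWithinAt y' (y'' s) (Icc (0:ℝ) L) s)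
    (hcont : ContinuousOn y'' (Icc (0:ℝ) L))
    (hunit : ∀ s ∈ Icc (0:ℝ) L, ‖y' s‖ = 1)
    (hstart : ‖y 0 - x₀‖ = 2)
    (hmono : MonotoneOn (fun s => ‖y s - x₀‖) (Icc (0:ℝ) L)) :
    (∫ s in (0:ℝ)..L, 1 / ‖y s - x₀‖ ^ 2) < 2 * (∫ s in (0:ℝ)..L, ‖y'' s‖) + 3 := by
  rcases eq_or_lt_of_le hL with rfl | hL0
  · simp
  have h0mem : (0:ℝ) ∈ Icc (0:ℝ) L := ⟨le_refl 0, hL⟩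
  have hLmem : L ∈ Icc (0:ℝ) L := ⟨hL, le_refl L⟩
  set r : ℝ → ℝ := fun s => ‖y s - x₀‖ with hrdef
  set h : ℝ → ℝ := fun s => (inner ℝ (y s - x₀) (y' s) : ℝ) with hhdef
  set ip : ℝ → ℝ := fun s => (inner ℝ (y s - x₀) (y'' s) : ℝ) with hipdef
  set G : ℝ → ℝ := fun s => h s / r s ^ 2 - 2 / r s with hGdef
  set G' : ℝ → ℝ := fun s =>
    ((1 + ip s) * r s ^ 2 - h s * (2 * h s)) / (r s ^ 2) ^ 2
      + 2 * (2 * h s / (2 * r s)) / r s ^ 2 with hG'def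
  -- basic bounds
  have hr2 : ∀ s ∈ Icc (0:ℝ) L, 2 ≤ r s := by
    intro s hs
    have := hmono h0mem hs hs.1
    simpa [hrdef, hstart] using this
  have hrpos : ∀ s ∈ Icc (0:ℝ) L, 0 < r s := fun s hs => lt_of_lt_of_le two_pos (hr2 s hs)
  have hCS : ∀ s ∈ Icc (0:ℝ) L, |h s| ≤ r s := by
    intro s hs
    have := abs_real_inner_le_norm (y s - x₀) (y' s)
    simpa [hhdef, hrdef, hunit s hs] using this
  have hipb : ∀ s ∈ Icc (0:ℝ) L, |ip s| ≤ r s * ‖y'' s‖ :=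
    fun s hs => abs_real_inner_le_norm (y s - x₀) (y'' s)
  -- derivatives
  have hv : ∀ s ∈ Icc (0:ℝ) L, HasDerivWithinAt (fun t => y t - x₀) (y' s) (Icc (0:ℝ) L) s :=
    fun s hs => (hd1 s hs).sub_const x₀
  have hg : ∀ s ∈ Icc (0:ℝ) L,
      HasDerivWithinAt (fun t => r t ^ 2) (2 * h s) (Icc (0:ℝ) L) s := by
    intro s hs
    exact (hv s hs).norm_sq
  have hh : ∀ s ∈ Icc (0:ℝ) L, HasDerivWithinAt h (1 + ip s) (Icc (0:ℝ) L) s := by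
    intro s hs
    have := HasDerivWithinAt.inner ℝ (hv s hs) (hd2 s hs)
    have h1 : (inner ℝ (y' s) (y' s) : ℝ) = 1 := by
      rw [real_inner_self_eq_norm_sq, hunit s hs]; norm_num
    simpa [hhdef, hipdef, h1, hunit s hs, add_comm] using this
  have hr' : ∀ s ∈ Icc (0:ℝ) L,
      HasDerivWithinAt r (2 * h s / (2 * r s)) (Icc (0:ℝ) L) s := by
    intro s hs
    have hne : r s ^ 2 ≠ 0 := pow_ne_zero 2 (ne_of_gt (hrpos s hs))
    have := (hg s hs).sqrt hne
    have heq : (fun t => Real.sqrt (r t ^ 2)) = r := by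
      funext t; exact Real.sqrt_sq (norm_nonneg _)
    have hs2 : Real.sqrt (r s ^ 2) = r s := Real.sqrt_sq (norm_nonneg _)
    rw [heq, hs2] at this
    exact this
  have hG : ∀ s ∈ Icc (0:ℝ) L, HasDerivWithinAt G (G' s) (Icc (0:ℝ) L) s := by
    intro s hs
    have hrne : r s ≠ 0 := ne_of_gt (hrpos s hs)
    have hgne : r s ^ 2 ≠ 0 := pow_ne_zero 2 hrne
    have h1 : HasDerivWithinAt (fun t => h t / r t ^ 2)
        (((1 + ip s) * r s ^ 2 - h s * (2 * h s)) / (r s ^ 2) ^ 2) (Icc (0:ℝ) L) s :=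
      (hh s hs).div (hg s hs) hgne
    have h2 : HasDerivWithinAt (fun t => 2 / r t)
        ((0 * r s - 2 * (2 * h s / (2 * r s))) / r s ^ 2) (Icc (0:ℝ) L) s :=
      (hasDerivWithinAt_const _ _ (2:ℝ)).div (hr' s hs) hrne
    have := h1.sub h2
    refine this.congr_deriv ?_
    rw [hG'def]
    ring
  -- h is nonnegative (distance is monotone)
  have hh0 : ∀ s ∈ Icc (0:ℝ) L, 0 ≤ h s := by
    intro s hs
    have hslope := hg s hs
    rw [hasDerivWithinAt_iff_tendsto_slope] at hslope
    have hne : (𝓝[Icc (0:ℝ) L \ {s}] s).NeBot := by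
      rw [← mem_closure_iff_nhdsWithin_neBot]
      rcases lt_or_eq_of_le hs.2 with hsl | hsl
      · have hsub : Ioc s L ⊆ Icc (0:ℝ) L \ {s} := by
          intro t ht
          exact ⟨⟨le_trans hs.1 ht.1.le, ht.2⟩, ne_of_gt ht.1⟩
        refine closure_mono hsub ?_
        rw [closure_Ioc (ne_of_lt hsl)]
        exact ⟨le_refl s, hsl.le⟩
      · subst hsl
        have hsub : Ico (0:ℝ) s ⊆ Icc (0:ℝ) s \ {s} := by
          intro t ht
          exact ⟨⟨ht.1, ht.2.le⟩, ne_of_lt ht.2⟩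
        refine closure_mono hsub ?_
        rw [closure_Ico (ne_of_lt hL0)]
        exact ⟨hL0.le, le_refl s⟩
    have hmono2 : MonotoneOn (fun u => r u ^ 2) (Icc (0:ℝ) L) := by
      intro a ha b hb hab
      exact pow_le_pow_left₀ (norm_nonneg _) (hmono ha hb hab) 2
    have hquot : ∀ t ∈ Icc (0:ℝ) L \ {s}, 0 ≤ slope (fun u => r u ^ 2) s t := by
      intro t ht
      have hts : t ≠ s := ht.2
      rw [slope_def_field]
      rcases lt_or_gt_of_ne hts with hlt | hgt
      · apply div_nonneg_of_nonpos
        · have h1 : r t ^ 2 ≤ r s ^ 2 := hmono2 ht.1 hs hlt.le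
          linarith
        · linarith
      · apply div_nonneg
        · have h1 : r s ^ 2 ≤ r t ^ 2 := hmono2 hs ht.1 hgt.le
          linarith
        · linarith
    haveI := hne
    have hfin : 0 ≤ 2 * h s := by
      refine ge_of_tendsto hslope ?_
      filter_upwards [self_mem_nhdsWithin] with t ht using hquot t ht
    linarith
  -- continuity facts
  have hycont : ContinuousOn y (Icc (0:ℝ) L) := fun s hs => (hd1 s hs).continuousWithinAt
  have hrcont : ContinuousOn r (Icc (0:ℝ) L) := (hycont.sub continuousOn_const).norm
  have hy'cont : ContinuousOn y' (Icc (0:ℝ) L) := fun s hs => (hd2 s hs).continuousWithinAt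
  have hhcont : ContinuousOn h (Icc (0:ℝ) L) :=
    (hycont.sub continuousOn_const).inner hy'cont
  have hipcont : ContinuousOn ip (Icc (0:ℝ) L) :=
    (hycont.sub continuousOn_const).inner hcont
  have hrne : ∀ s ∈ Icc (0:ℝ) L, r s ≠ 0 := fun s hs => ne_of_gt (hrpos s hs)
  have hG'cont : ContinuousOn G' (Icc (0:ℝ) L) := by
    apply ContinuousOn.add
    · apply ContinuousOn.div
      · exact ((continuousOn_const.add hipcont).mul (hrcont.pow 2)).sub
          (hhcont.mul (continuousOn_const.mul hhcont))
      · exact (hrcont.pow 2).pow 2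
      · intro s hs
        exact pow_ne_zero 2 (pow_ne_zero 2 (hrne s hs))
    · apply ContinuousOn.div
      · apply ContinuousOn.mul continuousOn_const
        apply ContinuousOn.div (continuousOn_const.mul hhcont)
          (continuousOn_const.mul hrcont)
        intro s hs
        exact mul_ne_zero two_ne_zero (hrne s hs)
      · exact hrcont.pow 2
      · intro s hs
        exact pow_ne_zero 2 (hrne s hs)
  have hGcont : ContinuousOn G (Icc (0:ℝ) L) := fun s hs => (hG s hs).continuousWithinAt
  have h1gcont : ContinuousOn (fun s => 1 / r s ^ 2) (Icc (0:ℝ) L) := by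
    apply ContinuousOn.div continuousOn_const (hrcont.pow 2)
    intro s hs
    exact pow_ne_zero 2 (hrne s hs)
  have huIcc : uIcc (0:ℝ) L = Icc (0:ℝ) L := uIcc_of_le hL
  -- pointwise inequality
  have key : ∀ s ∈ Icc (0:ℝ) L, 1 / r s ^ 2 ≤ G' s + 2 * ‖y'' s‖ := by
    intro s hs
    have h2 := hr2 s hs
    have hposr := hrpos s hs
    have hCSs := hCS s hs
    have hips := hipb s hs
    have hh0s := hh0 s hs
    have hip_low : -(r s * ‖y'' s‖) ≤ ip s := neg_le_of_abs_le hips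
    have hN : 0 ≤ ‖y'' s‖ := norm_nonneg _
    have hhle : h s ≤ r s := le_trans (le_abs_self _) hCSs
    have heq : G' s + 2 * ‖y'' s‖ - 1 / r s ^ 2 =
        (ip s * r s ^ 2 + 2 * h s * (r s - h s) + 2 * ‖y'' s‖ * r s ^ 4) / r s ^ 4 := by
      rw [hG'def]
      field_simp
      ring
    have hnum : 0 ≤ ip s * r s ^ 2 + 2 * h s * (r s - h s) + 2 * ‖y'' s‖ * r s ^ 4 := by
      nlinarith [mul_nonneg (mul_nonneg hN (le_of_lt hposr)) (sq_nonneg (r s)),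
        mul_nonneg hh0s (sub_nonneg.mpr hhle),
        mul_le_mul_of_nonneg_right hip_low (sq_nonneg (r s))]
    have hden : (0:ℝ) < r s ^ 4 := by positivity
    nlinarith [div_nonneg hnum hden.le]
  -- integrability
  have hint1 : IntervalIntegrable (fun s => 1 / r s ^ 2) volume 0 L := by
    apply ContinuousOn.intervalIntegrable; rwa [huIcc]
  have hintG' : IntervalIntegrable G' volume 0 L := by
    apply ContinuousOn.intervalIntegrable; rwa [huIcc]
  have hintN : IntervalIntegrable (fun s => ‖y'' s‖) volume 0 L := by
    apply ContinuousOn.intervalIntegrable; rw [huIcc]; exact hcont.norm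
  have hint2 : IntervalIntegrable (fun s => G' s + 2 * ‖y'' s‖) volume 0 L :=
    hintG'.add (hintN.const_mul 2)
  -- integral comparison
  have hmono_int : (∫ s in (0:ℝ)..L, 1 / r s ^ 2)
      ≤ ∫ s in (0:ℝ)..L, (G' s + 2 * ‖y'' s‖) := by
    apply intervalIntegral.integral_mono_on hL hint1 hint2
    intro s hs
    exact key s hs
  -- FTC
  have hftc : (∫ s in (0:ℝ)..L, G' s) = G L - G 0 := by
    apply intervalIntegral.integral_eq_sub_of_hasDeriv_right_of_le hL hGcont _ hintG'
    intro x hx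
    have hxmem : x ∈ Icc (0:ℝ) L := ⟨hx.1.le, hx.2.le⟩
    exact (hG x hxmem).mono_of_mem_nhdsWithin (Icc_mem_nhdsGT_of_mem ⟨hx.1.le, hx.2⟩)
  have hsplit : (∫ s in (0:ℝ)..L, (G' s + 2 * ‖y'' s‖))
      = (G L - G 0) + 2 * ∫ s in (0:ℝ)..L, ‖y'' s‖ := by
    rw [intervalIntegral.integral_add hintG' (hintN.const_mul 2), hftc,
      intervalIntegral.integral_const_mul]
  -- bound G L - G 0
  have hGL : G L - G 0 ≤ 1 := by
    have hr2L := hr2 L hLmem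
    have hrL : 0 < r L := hrpos L hLmem
    have hhL : h L ≤ r L := le_trans (le_abs_self _) (hCS L hLmem)
    have hh00 : 0 ≤ h 0 := hh0 0 h0mem
    have hr0 : r 0 = 2 := by simp [hrdef, hstart]
    have hGLle : G L ≤ 0 := by
      rw [hGdef]
      simp only
      have h1 : h L / r L ^ 2 ≤ 1 / r L := by
        rw [div_le_div_iff₀ (by positivity) hrL]
        nlinarith
      have h2 : 1 / r L ≤ 2 / r L := by
        gcongr
        norm_num
      linarith
    have hG0ge : -1 ≤ G 0 := by
      rw [hGdef]
      simp only [hr0]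
      have : 0 ≤ h 0 / (2:ℝ) ^ 2 := div_nonneg hh00 (by norm_num)
      norm_num
      linarith
    linarith
  have hk : 0 ≤ ∫ s in (0:ℝ)..L, ‖y'' s‖ :=
    intervalIntegral.integral_nonneg hL (fun s _ => norm_nonneg _)
  calc (∫ s in (0:ℝ)..L, 1 / r s ^ 2)
      ≤ (G L - G 0) + 2 * ∫ s in (0:ℝ)..L, ‖y'' s‖ := by rw [← hsplit]; exact hmono_int
    _ ≤ 1 + 2 * ∫ s in (0:ℝ)..L, ‖y'' s‖ := by linarith
    _ < 2 * (∫ s in (0:ℝ)..L, ‖y'' s‖) + 3 := by linarith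
end

section
/- Let Y be a C² unit-speed curve in ℝ³ with |y − x₀| ≥ 2 for all y ∈ Y. Then ∫_Y 1/|y − x₀|² ds ≤ 16 + 43·κ(Y), where κ(Y) is the total curvature of Y. -/
open MeasureTheory Real Set

private lemma illum_key (r h q n : ℝ) (hr : 2 ≤ r) (hh : h ^ 2 ≤ r ^ 2)
    (hq : |q| ≤ r * n) (hn : 0 ≤ n) :
    1 / r ^ 2 ≤ (1 + q) * ((r - 1) / r ^ 2) + h ^ 2 * ((2 - r) / r ^ 4) + n := by
  have hr0 : (0:ℝ) < r := by linarith
  have h4 : (0:ℝ) < r ^ 4 := by positivity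
  have h2 : (0:ℝ) < r ^ 2 := by positivity
  have hq' := abs_le.mp hq
  have e1 : 1 / r ^ 2 = r ^ 2 / r ^ 4 := by
    field_simp
  have e2 : (1 + q) * ((r - 1) / r ^ 2) + h ^ 2 * ((2 - r) / r ^ 4) + n
      = ((1 + q) * (r - 1) * r ^ 2 + h ^ 2 * (2 - r) + n * r ^ 4) / r ^ 4 := by
    field_simp
  rw [e1, e2, div_le_div_iff₀ h4 h4]
  nlinarith [mul_nonneg (sub_nonneg.2 hr) (sub_nonneg.2 hh),
    mul_nonneg (by linarith [hq'.1] : (0:ℝ) ≤ q + r * n)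
      (by nlinarith : (0:ℝ) ≤ (r - 1) * r ^ 2),
    mul_nonneg hn (by positivity : (0:ℝ) ≤ r ^ 3),
    sq_nonneg r, sq_nonneg (r*r)]

/-- Illumination lemma: if a C² unit-speed curve `Y` stays at distance at
least `2` from `x₀`, then the illumination of `x₀` by `Y` is at most
`16 + 43·κ(Y)`, where `κ(Y)` is the total curvature of `Y`. -/
theorem illumination_lemma
    (L : ℝ) (hL : 0 ≤ L) (x₀ : EuclideanSpace ℝ (Fin 3))
    (y y' y'' : ℝ → EuclideanSpace ℝ (Fin 3))
    (hd1 : ∀ s ∈ Icc (0:ℝ) L, HasDerivWithinAt y (y' s) (Icc (0:ℝ) L) s)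
    (hd2 : ∀ s ∈ Icc (0:ℝ) L, HasDerivWithinAt y' (y'' s) (Icc (0:ℝ) L) s)
    (hcont : ContinuousOn y'' (Icc (0:ℝ) L))
    (hunit : ∀ s ∈ Icc (0:ℝ) L, ‖y' s‖ = 1)
    (hfar : ∀ s ∈ Icc (0:ℝ) L, 2 ≤ ‖y s - x₀‖) :
    (∫ s in (0:ℝ)..L, 1 / ‖y s - x₀‖ ^ 2) ≤ 16 + 43 * ∫ s in (0:ℝ)..L, ‖y'' s‖ := by
  have h0L : (0:ℝ) ∈ Icc (0:ℝ) L := ⟨le_refl _, hL⟩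
  have hLL : L ∈ Icc (0:ℝ) L := ⟨hL, le_refl _⟩
  set r : ℝ → ℝ := fun s => ‖y s - x₀‖ with hr_def
  set h : ℝ → ℝ := fun s => inner (𝕜 := ℝ) (y s - x₀) (y' s) with hh_def
  set F : ℝ → ℝ := fun s => h s * ((r s - 1) / (r s) ^ 2) with hF_def
  set G : ℝ → ℝ := fun s =>
    (1 + inner (𝕜 := ℝ) (y s - x₀) (y'' s)) * ((r s - 1) / (r s) ^ 2)
      + (h s) ^ 2 * ((2 - r s) / (r s) ^ 4) with hG_def
  have hrpos : ∀ s ∈ Icc (0:ℝ) L, (0:ℝ) < r s := fun s hs => by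
    have := hfar s hs; simp only [hr_def]; linarith
  -- derivative of u
  have hu : ∀ s ∈ Icc (0:ℝ) L,
      HasDerivWithinAt (fun t => y t - x₀) (y' s) (Icc (0:ℝ) L) s :=
    fun s hs => (hd1 s hs).sub_const x₀
  -- derivative of h
  have hhder : ∀ s ∈ Icc (0:ℝ) L,
      HasDerivWithinAt h (1 + inner (𝕜 := ℝ) (y s - x₀) (y'' s)) (Icc (0:ℝ) L) s := by
    intro s hs
    have := (hu s hs).inner ℝ (hd2 s hs)
    have h1 : inner (𝕜 := ℝ) (y' s) (y' s) = (1:ℝ) := by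
      rw [real_inner_self_eq_norm_sq, hunit s hs]; norm_num
    simpa [hh_def, h1, hunit s hs, add_comm] using this
  -- derivative of r
  have hrder : ∀ s ∈ Icc (0:ℝ) L,
      HasDerivWithinAt r (h s / r s) (Icc (0:ℝ) L) s := by
    intro s hs
    have hnsq : HasDerivWithinAt (fun t => ‖y t - x₀‖ ^ 2)
        (2 * inner (𝕜 := ℝ) (y s - x₀) (y' s)) (Icc (0:ℝ) L) s :=
      (hu s hs).norm_sq
    have hne : ‖y s - x₀‖ ^ 2 ≠ 0 := by
      have := hrpos s hs; positivity
    have hsqrt := (Real.hasDerivAt_sqrt hne).comp_hasDerivWithinAt s hnsq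
    have heq : ∀ t, Real.sqrt (‖y t - x₀‖ ^ 2) = r t := fun t =>
      Real.sqrt_sq (norm_nonneg _)
    have h2 : HasDerivWithinAt r
        (1 / (2 * Real.sqrt (‖y s - x₀‖ ^ 2)) * (2 * inner (𝕜 := ℝ) (y s - x₀) (y' s)))
        (Icc (0:ℝ) L) s := by
      refine HasDerivWithinAt.congr hsqrt (fun t _ => (heq t).symm) (heq s).symm
    have hr0 := (hrpos s hs).ne'
    have : 1 / (2 * Real.sqrt (‖y s - x₀‖ ^ 2)) * (2 * inner (𝕜 := ℝ) (y s - x₀) (y' s))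
        = h s / r s := by
      rw [heq s]
      field_simp [hh_def]
      ring
    rwa [this] at h2
  -- derivative of F
  have hFder : ∀ s ∈ Icc (0:ℝ) L, HasDerivWithinAt F (G s) (Icc (0:ℝ) L) s := by
    intro s hs
    have hr0 := (hrpos s hs).ne'
    have hgd : HasDerivWithinAt (fun t => (r t - 1) / (r t) ^ 2)
        (((h s / r s) * (r s) ^ 2 - (r s - 1) * (2 * r s * (h s / r s))) / ((r s) ^ 2) ^ 2)
        (Icc (0:ℝ) L) s := by
      exact HasDerivWithinAt.div ((hrder s hs).sub_const 1)
        (HasDerivWithinAt.fun_pow (hrder s hs) 2 |>.congr_deriv (by ring))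
        (by positivity)
    have := (hhder s hs).mul hgd
    refine this.congr_deriv ?_
    simp only [hG_def, hh_def]
    field_simp
    ring
  -- F is continuous on Icc
  have hFcont : ContinuousOn F (Icc (0:ℝ) L) :=
    fun s hs => (hFder s hs).continuousWithinAt
  -- continuity pieces
  have hycont : ContinuousOn y (Icc (0:ℝ) L) := fun s hs => (hd1 s hs).continuousWithinAt
  have hy'cont : ContinuousOn y' (Icc (0:ℝ) L) := fun s hs => (hd2 s hs).continuousWithinAt
  have hrcont : ContinuousOn r (Icc (0:ℝ) L) := (hycont.sub continuousOn_const).norm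
  have hhcont : ContinuousOn h (Icc (0:ℝ) L) :=
    (hycont.sub continuousOn_const).inner hy'cont
  have hGcont : ContinuousOn G (Icc (0:ℝ) L) := by
    apply ContinuousOn.add
    · exact (continuousOn_const.add ((hycont.sub continuousOn_const).inner hcont)).mul
        (((hrcont.sub continuousOn_const)).div (hrcont.pow 2)
          (fun s hs => by have := hrpos s hs; positivity))
    · exact (hhcont.pow 2).mul
        ((continuousOn_const.sub hrcont).div (hrcont.pow 4)
          (fun s hs => by have := hrpos s hs; positivity))
  have hGint : IntervalIntegrable G volume 0 L :=
    hGcont.intervalIntegrable_of_Icc hL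
  -- FTC
  have hFTC : ∫ s in (0:ℝ)..L, G s = F L - F 0 := by
    refine intervalIntegral.integral_eq_sub_of_hasDeriv_right_of_le hL hFcont ?_ hGint
    intro x hx
    exact ((hFder x (Ioo_subset_Icc_self hx)).hasDerivAt
      (Icc_mem_nhds hx.1 hx.2)).hasDerivWithinAt
  -- pointwise bound
  have hpt : ∀ s ∈ Icc (0:ℝ) L, 1 / (r s) ^ 2 ≤ G s + ‖y'' s‖ := by
    intro s hs
    have hr2 := hfar s hs
    have hcs : (h s) ^ 2 ≤ (r s) ^ 2 := by
      have := abs_real_inner_le_norm (y s - x₀) (y' s)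
      rw [hunit s hs, mul_one] at this
      have : |h s| ≤ r s := this
      nlinarith [abs_nonneg (h s), sq_abs (h s)]
    have hq : |inner (𝕜 := ℝ) (y s - x₀) (y'' s)| ≤ r s * ‖y'' s‖ := by
      simpa [hr_def] using abs_real_inner_le_norm (y s - x₀) (y'' s)
    exact illum_key (r s) (h s) _ (‖y'' s‖) hr2 hcs hq (norm_nonneg _)
  -- integrabilities
  have hint1 : IntervalIntegrable (fun s => 1 / (r s) ^ 2) volume 0 L := by
    refine (ContinuousOn.div continuousOn_const (hrcont.pow 2)
      (fun s hs => pow_ne_zero 2 (hrpos s hs).ne')).intervalIntegrable_of_Icc hL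
  have hint2 : IntervalIntegrable (fun s => ‖y'' s‖) volume 0 L :=
    hcont.norm.intervalIntegrable_of_Icc hL
  have hint3 : IntervalIntegrable (fun s => G s + ‖y'' s‖) volume 0 L :=
    hGint.add hint2
  -- integral comparison
  have hmono : (∫ s in (0:ℝ)..L, 1 / (r s) ^ 2) ≤ ∫ s in (0:ℝ)..L, (G s + ‖y'' s‖) := by
    apply intervalIntegral.integral_mono_on hL hint1 hint3
    intro s hs
    exact hpt s hs
  have hsplit : (∫ s in (0:ℝ)..L, (G s + ‖y'' s‖))
      = (F L - F 0) + ∫ s in (0:ℝ)..L, ‖y'' s‖ := by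
    rw [intervalIntegral.integral_add hGint hint2, hFTC]
  -- bound on |F| at endpoints
  have hFbd : ∀ s ∈ Icc (0:ℝ) L, |F s| ≤ 1 := by
    intro s hs
    have hr2 := hfar s hs
    have hrp := hrpos s hs
    have hcs : |h s| ≤ r s := by
      have := abs_real_inner_le_norm (y s - x₀) (y' s)
      rw [hunit s hs, mul_one] at this
      exact this
    have hg0 : 0 ≤ (r s - 1) / (r s) ^ 2 := by
      apply div_nonneg (by linarith) (by positivity)
    rw [hF_def]
    simp only
    rw [abs_mul, abs_of_nonneg hg0]
    calc |h s| * ((r s - 1) / (r s) ^ 2) ≤ r s * ((r s - 1) / (r s) ^ 2) :=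
          mul_le_mul_of_nonneg_right hcs hg0
      _ ≤ 1 := by
          have e : r s * ((r s - 1) / r s ^ 2) = (r s - 1) / r s := by
            field_simp
          rw [e, div_le_one hrp]
          linarith
  have hκ : 0 ≤ ∫ s in (0:ℝ)..L, ‖y'' s‖ :=
    intervalIntegral.integral_nonneg hL (fun s _ => norm_nonneg _)
  have hFL := (abs_le.mp (hFbd L hLL))
  have hF0 := (abs_le.mp (hFbd 0 h0L))
  calc (∫ s in (0:ℝ)..L, 1 / ‖y s - x₀‖ ^ 2)
      = ∫ s in (0:ℝ)..L, 1 / (r s) ^ 2 := rfl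
    _ ≤ (F L - F 0) + ∫ s in (0:ℝ)..L, ‖y'' s‖ := by rw [← hsplit]; exact hmono
    _ ≤ 16 + 43 * ∫ s in (0:ℝ)..L, ‖y'' s‖ := by nlinarith [hFL.1, hFL.2, hF0.1, hF0.2]
end

section
/- Let x : [0,π] → ℝ³ be a C² unit-speed curve with |x''(θ)| ≤ 1 for all θ, and let T_x = x'(0), T_y = x'(θ), and y = x(θ) for θ ∈ (0,π]. Then |⟨T_x × T_y, x(0) − y⟩| ≤ (1/2)·θ³. -/
open MeasureTheory Real Set

/-- Scalar triple product `⟨u × v, w⟩` of three vectors in `ℝ³`. -/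
noncomputable def tripleProduct (u v w : EuclideanSpace ℝ (Fin 3)) : ℝ :=
  (u 1 * v 2 - u 2 * v 1) * w 0 + (u 2 * v 0 - u 0 * v 2) * w 1
    + (u 0 * v 1 - u 1 * v 0) * w 2

lemma normsq_eq (u : EuclideanSpace ℝ (Fin 3)) :
    ‖u‖ ^ 2 = u 0 ^ 2 + u 1 ^ 2 + u 2 ^ 2 := by
  rw [EuclideanSpace.norm_eq, Real.sq_sqrt (by positivity)]
  simp [Fin.sum_univ_three, sq_abs]

lemma abs_tripleProduct_le (u v w : EuclideanSpace ℝ (Fin 3)) :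
    |tripleProduct u v w| ≤ ‖u‖ * ‖v‖ * ‖w‖ := by
  have hu := normsq_eq u
  have hv := normsq_eq v
  have hw := normsq_eq w
  set c0 : ℝ := u 1 * v 2 - u 2 * v 1 with hc0
  set c1 : ℝ := u 2 * v 0 - u 0 * v 2 with hc1
  set c2 : ℝ := u 0 * v 1 - u 1 * v 0 with hc2
  have hcross : c0 ^ 2 + c1 ^ 2 + c2 ^ 2 ≤ ‖u‖ ^ 2 * ‖v‖ ^ 2 := by
    rw [hu, hv, hc0, hc1, hc2]
    nlinarith [sq_nonneg (u 0 * v 0 + u 1 * v 1 + u 2 * v 2)]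
  have hcs : (tripleProduct u v w) ^ 2 ≤ (c0 ^ 2 + c1 ^ 2 + c2 ^ 2) * ‖w‖ ^ 2 := by
    have h : tripleProduct u v w = c0 * w 0 + c1 * w 1 + c2 * w 2 := by
      rw [tripleProduct, hc0, hc1, hc2]
    rw [h, hw]
    nlinarith [sq_nonneg (c0 * w 1 - c1 * w 0), sq_nonneg (c0 * w 2 - c2 * w 0),
      sq_nonneg (c1 * w 2 - c2 * w 1)]
  have hsq : (tripleProduct u v w) ^ 2 ≤ (‖u‖ * ‖v‖ * ‖w‖) ^ 2 := by
    calc (tripleProduct u v w) ^ 2 ≤ (c0 ^ 2 + c1 ^ 2 + c2 ^ 2) * ‖w‖ ^ 2 := hcs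
    _ ≤ (‖u‖ ^ 2 * ‖v‖ ^ 2) * ‖w‖ ^ 2 :=
        mul_le_mul_of_nonneg_right hcross (by positivity)
    _ = (‖u‖ * ‖v‖ * ‖w‖) ^ 2 := by ring
  have hnn : (0:ℝ) ≤ ‖u‖ * ‖v‖ * ‖w‖ := by positivity
  nlinarith [abs_nonneg (tripleProduct u v w), sq_abs (tripleProduct u v w)]

/-- Triple product bound: for a C² unit-speed curve with `|x''| ≤ 1`,
`|⟨x'(0) × x'(θ), x(0) − x(θ)⟩| ≤ θ³/2` for `θ ∈ (0, π]`. -/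
theorem triple_product_bound
    (x x' x'' : ℝ → EuclideanSpace ℝ (Fin 3))
    (hd1 : ∀ s ∈ Icc (0:ℝ) π, HasDerivWithinAt x (x' s) (Icc (0:ℝ) π) s)
    (hd2 : ∀ s ∈ Icc (0:ℝ) π, HasDerivWithinAt x' (x'' s) (Icc (0:ℝ) π) s)
    (hcont : ContinuousOn x'' (Icc (0:ℝ) π))
    (hunit : ∀ s ∈ Icc (0:ℝ) π, ‖x' s‖ = 1)
    (hcurv : ∀ s ∈ Icc (0:ℝ) π, ‖x'' s‖ ≤ 1) :
    ∀ θ ∈ Ioc (0:ℝ) π,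
      |tripleProduct (x' 0) (x' θ) (x 0 - x θ)| ≤ (1 / 2) * θ ^ 3 := by
  intro θ hθ
  obtain ⟨hθ0, hθπ⟩ := hθ
  have h0mem : (0:ℝ) ∈ Icc (0:ℝ) π := ⟨le_refl 0, pi_pos.le⟩
  have hθmem : θ ∈ Icc (0:ℝ) π := ⟨hθ0.le, hθπ⟩
  -- ‖x' s - x' 0‖ ≤ s for s ∈ [0, π]
  have hV : ∀ s ∈ Icc (0:ℝ) π, ‖x' s - x' 0‖ ≤ s := by
    intro s hs
    have h := Convex.norm_image_sub_le_of_norm_hasDerivWithin_le hd2 hcurv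
      (convex_Icc 0 π) h0mem hs
    simpa [abs_of_nonneg hs.1] using h
  -- Taylor remainder: ‖x θ - x 0 - θ • x' 0‖ ≤ θ²/2
  set g : ℝ → EuclideanSpace ℝ (Fin 3) := fun s => x s - x 0 - s • x' 0 with hg
  have hgderiv : ∀ s ∈ Ico (0:ℝ) θ, HasDerivWithinAt g (x' s - x' 0) (Ici s) s := by
    intro s hs
    have hsmem : s ∈ Icc (0:ℝ) π := ⟨hs.1, le_trans hs.2.le hθπ⟩
    have hsIco : s ∈ Ico (0:ℝ) π := ⟨hs.1, lt_of_lt_of_le hs.2 hθπ⟩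
    have h1 : HasDerivWithinAt x (x' s) (Ici s) s :=
      (hd1 s hsmem).mono_of_mem_nhdsWithin (Icc_mem_nhdsGE_of_mem hsIco)
    have h2 : HasDerivWithinAt (fun t : ℝ => t • x' 0) (x' 0) (Ici s) s := by
      simpa using ((hasDerivAt_id s).smul_const (x' 0)).hasDerivWithinAt
    have h3 := (h1.sub (hasDerivWithinAt_const s _ (x 0))).sub h2
    rw [sub_zero] at h3
    exact h3
  have hgcont : ContinuousOn g (Icc (0:ℝ) θ) := by
    have hxcont : ContinuousOn x (Icc (0:ℝ) π) := fun s hs =>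
      (hd1 s hs).continuousWithinAt
    exact ((hxcont.mono (Icc_subset_Icc le_rfl hθπ)).sub continuousOn_const).sub
      (continuousOn_id.smul continuousOn_const)
  have hB : ∀ s : ℝ, HasDerivAt (fun t : ℝ => t ^ 2 / 2) s s := by
    intro s
    have := (hasDerivAt_pow 2 s).div_const 2
    simpa using this
  have hR : ‖g θ‖ ≤ θ ^ 2 / 2 := by
    have := image_norm_le_of_norm_deriv_right_le_deriv_boundary hgcont hgderiv
      (B := fun t => t ^ 2 / 2) (by simp [hg]) hB
      (fun s hs => hV s ⟨hs.1, le_trans hs.2.le hθπ⟩)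
      (right_mem_Icc.mpr hθ0.le)
    exact this
  have hVθ : ‖x' θ - x' 0‖ ≤ θ := hV θ hθmem
  -- algebraic identity
  have hid : tripleProduct (x' 0) (x' θ) (x 0 - x θ)
      = -tripleProduct (x' 0) (x' θ - x' 0) (g θ) := by
    have hxθ : x 0 - x θ = -(θ • x' 0) - g θ := by
      simp [hg]; abel
    rw [hxθ]
    simp only [tripleProduct, PiLp.sub_apply, PiLp.neg_apply, PiLp.smul_apply, smul_eq_mul]
    ring
  rw [hid, abs_neg]
  calc |tripleProduct (x' 0) (x' θ - x' 0) (g θ)|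
      ≤ ‖x' 0‖ * ‖x' θ - x' 0‖ * ‖g θ‖ := abs_tripleProduct_le _ _ _
    _ = ‖x' θ - x' 0‖ * ‖g θ‖ := by rw [hunit 0 h0mem]; ring
    _ ≤ θ * (θ ^ 2 / 2) := by
        apply mul_le_mul hVθ hR (norm_nonneg _) hθ0.le
    _ = (1 / 2) * θ ^ 3 := by ring
end

section
/- Let x : [0,π] → ℝ³ be a C² unit-speed curve whose curvature satisfies |x''(θ)| ≤ 1 everywhere. Then for all θ ∈ [0,π], |x(θ) − x(0)| ≥ √(2 − 2cos θ), i.e., the chord of x is at least as long as the corresponding chord of the unit circle. -/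
open MeasureTheory Real Set
open scoped RealInnerProductSpace

/-- ODE comparison: a function whose derivative satisfies `|g'| ≤ √(1-g²)`
and which starts at `1` stays above `cos (s - a)`. -/
lemma schur_aux_cos (g g' : ℝ → ℝ) (a b : ℝ) (hπ : b - a ≤ π)
    (hd : ∀ s ∈ Icc a b, HasDerivWithinAt g (g' s) (Icc a b) s)
    (hlow : ∀ s ∈ Icc a b, -1 < g s) (hup : ∀ s ∈ Icc a b, g s ≤ 1)
    (hbnd : ∀ s ∈ Icc a b, |g' s| ≤ Real.sqrt (1 - g s ^ 2))
    (hga : g a = 1) :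
    ∀ s ∈ Icc a b, Real.cos (s - a) ≤ g s := by
  intro s hs
  have hcont : ContinuousOn g (Icc a b) := fun r hr => (hd r hr).continuousWithinAt
  set A : Set ℝ := {r | r ∈ Icc a s ∧ g r = 1} with hA
  have haA : a ∈ A := ⟨⟨le_refl a, hs.1⟩, hga⟩
  have hbdd : BddAbove A := ⟨s, fun r hr => hr.1.2⟩
  have hclosed : IsClosed A := by
    have : A = Icc a s ∩ g ⁻¹' ({1} : Set ℝ) := by
      ext r; simp [hA, Set.mem_inter_iff]
    rw [this]
    exact (hcont.mono (Icc_subset_Icc le_rfl hs.2)).preimage_isClosed_of_isClosed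
      isClosed_Icc isClosed_singleton
  set c := sSup A with hc
  have hcA : c ∈ A := hclosed.csSup_mem ⟨a, haA⟩ hbdd
  have hac : a ≤ c := hcA.1.1
  have hcs : c ≤ s := hcA.1.2
  have hgc : g c = 1 := hcA.2
  rcases eq_or_lt_of_le hcs with hceq | hclt
  · have : g s = 1 := hceq ▸ hgc
    rw [this]; exact Real.cos_le_one _
  · -- c < s : MVT on arccos ∘ g over [c, s]
    have hsubIcc : Icc c s ⊆ Icc a b := Icc_subset_Icc hac hs.2
    have hlt1 : ∀ r ∈ Ioc c s, g r < 1 := by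
      intro r hr
      refine lt_of_le_of_ne (hup r (hsubIcc ⟨hr.1.le, hr.2⟩)) ?_
      intro hgr
      have : r ≤ c := le_csSup hbdd ⟨⟨hac.trans hr.1.le, hr.2⟩, hgr⟩
      exact absurd this (not_le.2 hr.1)
    set Φ : ℝ → ℝ := fun r => Real.arccos (g r) with hΦ
    set Φ' : ℝ → ℝ := (fun r => -(1 / Real.sqrt (1 - g r ^ 2)) * g' r) with hΦ'
    have hΦcont : ContinuousOn Φ (Icc c s) :=
      Real.continuous_arccos.comp_continuousOn (hcont.mono hsubIcc)
    have hΦderiv : ∀ r ∈ Ioo c s, HasDerivAt Φ (Φ' r) r := by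
      intro r hr
      have hrmem : r ∈ Icc a b := hsubIcc ⟨hr.1.le, hr.2.le⟩
      have hg1 : g r < 1 := hlt1 r ⟨hr.1, hr.2.le⟩
      have hgm1 : -1 < g r := hlow r hrmem
      have hgd : HasDerivAt g (g' r) r := by
        refine (hd r hrmem).hasDerivAt (Icc_mem_nhds ?_ ?_)
        · exact lt_of_le_of_lt hac hr.1
        · exact lt_of_lt_of_le hr.2 hs.2
      exact (Real.hasDerivAt_arccos (ne_of_gt hgm1) (ne_of_lt hg1)).comp r hgd
    obtain ⟨t, ht, hslope⟩ := exists_hasDerivAt_eq_slope Φ Φ' hclt hΦcont hΦderiv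
    have htmem : t ∈ Icc a b := hsubIcc ⟨ht.1.le, ht.2.le⟩
    have hgt1 : g t < 1 := hlt1 t ⟨ht.1, ht.2.le⟩
    have hgtm1 : -1 < g t := hlow t htmem
    have hpos : 0 < Real.sqrt (1 - g t ^ 2) := by
      apply Real.sqrt_pos.2; nlinarith
    have hΦ't : |Φ' t| ≤ 1 := by
      have : |Φ' t| = |g' t| / Real.sqrt (1 - g t ^ 2) := by
        rw [hΦ', abs_mul, abs_neg, abs_div, abs_one, abs_of_pos hpos]
        ring
      rw [this, div_le_one hpos]
      exact hbnd t htmem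
    have hΦc : Φ c = 0 := by rw [hΦ]; simp [hgc, Real.arccos_one]
    have hΦs_le : Φ s ≤ s - c := by
      have h1 : (Φ s - Φ c) / (s - c) ≤ 1 := hslope ▸ (le_trans (le_abs_self _) hΦ't)
      have h2 : Φ s - Φ c ≤ s - c := by
        have := (div_le_one (by linarith : (0:ℝ) < s - c)).1 h1
        linarith
      linarith [hΦc ▸ h2]
    have hΦs_nonneg : 0 ≤ Φ s := Real.arccos_nonneg _
    have hcos : Real.cos (s - a) ≤ Real.cos (Φ s) := by
      apply Real.cos_le_cos_of_nonneg_of_le_pi hΦs_nonneg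
      · linarith [hs.2]
      · linarith
    have : Real.cos (Φ s) = g s :=
      Real.cos_arccos (hlow s hs).le (hup s hs)
    linarith [hcos, this.ge, this.le]

/-- Schur chord comparison: a C² unit-speed curve of length `π` with pointwise
curvature at most `1` has chords at least as long as those of the unit circle:
`|x(θ) − x(0)| ≥ √(2 − 2cos θ)`. -/
theorem schur_chord_bound
    (x x' x'' : ℝ → EuclideanSpace ℝ (Fin 3))
    (hd1 : ∀ s ∈ Icc (0:ℝ) π, HasDerivWithinAt x (x' s) (Icc (0:ℝ) π) s)
    (hd2 : ∀ s ∈ Icc (0:ℝ) π, HasDerivWithinAt x' (x'' s) (Icc (0:ℝ) π) s)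
    (hcont : ContinuousOn x'' (Icc (0:ℝ) π))
    (hunit : ∀ s ∈ Icc (0:ℝ) π, ‖x' s‖ = 1)
    (hcurv : ∀ s ∈ Icc (0:ℝ) π, ‖x'' s‖ ≤ 1) :
    ∀ θ ∈ Icc (0:ℝ) π, ‖x θ - x 0‖ ≥ Real.sqrt (2 - 2 * Real.cos θ) := by
  intro θ hθ
  rcases eq_or_lt_of_le hθ.1 with h0 | hθpos
  · rw [← h0]; simp
  set m : ℝ := θ / 2 with hm
  have hmmem : m ∈ Icc (0:ℝ) π := ⟨by positivity, by linarith [hθ.2]⟩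
  set u : EuclideanSpace ℝ (Fin 3) := x' m with hu
  have hunorm : ‖u‖ = 1 := hunit m hmmem
  set g : ℝ → ℝ := (fun s => ⟪x' s, u⟫) with hg
  set g' : ℝ → ℝ := (fun s => ⟪x'' s, u⟫) with hg'
  -- derivative of g
  have hgd : ∀ s ∈ Icc (0:ℝ) π, HasDerivWithinAt g (g' s) (Icc (0:ℝ) π) s := by
    intro s hs
    have := (hd2 s hs).inner ℝ (hasDerivWithinAt_const s (Icc (0:ℝ) π) u)
    simpa using this
  -- orthogonality of x'' and x'
  have horth : ∀ s ∈ Icc (0:ℝ) π, ⟪x'' s, x' s⟫ = 0 := by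
    intro s hs
    have hN : HasDerivWithinAt (fun t => ⟪x' t, x' t⟫)
        (⟪x' s, x'' s⟫ + ⟪x'' s, x' s⟫) (Icc (0:ℝ) π) s :=
      (hd2 s hs).inner ℝ (hd2 s hs)
    have hC : HasDerivWithinAt (fun t => ⟪x' t, x' t⟫) 0 (Icc (0:ℝ) π) s := by
      refine (hasDerivWithinAt_const s (Icc (0:ℝ) π) (1:ℝ)).congr ?_ ?_
      · intro t ht
        rw [real_inner_self_eq_norm_sq, hunit t ht]; norm_num
      · rw [real_inner_self_eq_norm_sq, hunit s hs]; norm_num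
    have e1 := hN.derivWithin ((uniqueDiffOn_Icc Real.pi_pos) s hs)
    have e2 := hC.derivWithin ((uniqueDiffOn_Icc Real.pi_pos) s hs)
    have h2 : ⟪x' s, x'' s⟫ + ⟪x'' s, x' s⟫ = (0:ℝ) := by rw [← e1, e2]
    rw [real_inner_comm (x' s) (x'' s)] at h2
    linarith
  -- |g| ≤ 1
  have habs : ∀ s ∈ Icc (0:ℝ) π, |g s| ≤ 1 := by
    intro s hs
    calc |g s| ≤ ‖x' s‖ * ‖u‖ := abs_real_inner_le_norm _ _
    _ = 1 := by rw [hunit s hs, hunorm]; norm_num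
  -- |g'| ≤ √(1 - g²)
  have hbnd : ∀ s ∈ Icc (0:ℝ) π, |g' s| ≤ Real.sqrt (1 - g s ^ 2) := by
    intro s hs
    set v : EuclideanSpace ℝ (Fin 3) := u - g s • x' s with hv
    have h1 : g' s = ⟪x'' s, v⟫ := by
      rw [hv, inner_sub_right, real_inner_smul_right, horth s hs]
      simp [hg']
    have h2 : ‖v‖ ^ 2 = 1 - g s ^ 2 := by
      have hcomm : (⟪u, x' s⟫ : ℝ) = g s := real_inner_comm (x' s) u
      rw [hv, norm_sub_sq_real, real_inner_smul_right, norm_smul, hunorm,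
        hunit s hs, hcomm]
      simp only [Real.norm_eq_abs, mul_one, sq_abs, one_pow]
      ring
    have h3 : ‖v‖ = Real.sqrt (1 - g s ^ 2) := by
      rw [← h2, Real.sqrt_sq (norm_nonneg v)]
    calc |g' s| = |⟪x'' s, v⟫| := by rw [h1]
    _ ≤ ‖x'' s‖ * ‖v‖ := abs_real_inner_le_norm _ _
    _ ≤ 1 * ‖v‖ := mul_le_mul_of_nonneg_right (hcurv s hs) (norm_nonneg v)
    _ = Real.sqrt (1 - g s ^ 2) := by rw [one_mul, h3]
  -- -1 < g on [0, θ]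
  have hsub : Icc (0:ℝ) θ ⊆ Icc (0:ℝ) π := Icc_subset_Icc le_rfl hθ.2
  have hlow : ∀ s ∈ Icc (0:ℝ) θ, -1 < g s := by
    intro s hs
    have hsπ : s ∈ Icc (0:ℝ) π := hsub hs
    have hlip : ‖x' s - u‖ ≤ 1 * ‖s - m‖ :=
      (convex_Icc (0:ℝ) π).norm_image_sub_le_of_norm_hasDerivWithin_le
        hd2 hcurv hmmem hsπ
    have hsm : |s - m| ≤ π / 2 := by
      rw [abs_le]
      obtain ⟨h1, h2⟩ := hs
      constructor <;> simp only [hm] <;> linarith [hθ.2]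
    have hch : ‖x' s - u‖ ≤ π / 2 := by
      rw [one_mul, Real.norm_eq_abs] at hlip
      exact hlip.trans hsm
    have hsq : ‖x' s - u‖ ^ 2 ≤ (π / 2) ^ 2 :=
      pow_le_pow_left₀ (norm_nonneg _) hch 2
    have hexp : ‖x' s - u‖ ^ 2 = 2 - 2 * g s := by
      rw [norm_sub_sq_real, hunit s hsπ, hunorm]
      simp only [hg]
      ring
    have hπ4 : π < 4 := by linarith [Real.pi_lt_d2]
    nlinarith [Real.pi_pos]
  -- g m = 1
  have hgm : g m = 1 := by
    simp only [hg]
    rw [← hu, real_inner_self_eq_norm_sq, hunorm]; norm_num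
  -- key inequality, right half
  have hmθ : Icc m θ ⊆ Icc (0:ℝ) π := Icc_subset_Icc hmmem.1 hθ.2
  have hmθ' : Icc m θ ⊆ Icc (0:ℝ) θ := Icc_subset_Icc hmmem.1 le_rfl
  have keyR : ∀ s ∈ Icc m θ, Real.cos (s - m) ≤ g s := by
    apply schur_aux_cos g g' m θ
      (by simp only [hm]; linarith [hθ.2, Real.pi_pos])
      (fun s hs => (hgd s (hmθ hs)).mono hmθ)
      (fun s hs => hlow s (hmθ' hs))
      (fun s hs => (abs_le.1 (habs s (hmθ hs))).2)
      (fun s hs => hbnd s (hmθ hs))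
      hgm
  -- key inequality, left half (reflected)
  have keyL : ∀ s ∈ Icc (0:ℝ) m, Real.cos (s - m) ≤ g s := by
    have hmθle : m ≤ θ := by simp only [hm]; linarith
    have haux := schur_aux_cos (fun t => g (m - t)) (fun t => g' (m - t) * (-1)) 0 m
      (by simpa using hmmem.2)
      (by
        intro t ht
        have htm : m - t ∈ Icc (0:ℝ) π := ⟨by linarith [ht.2], by linarith [ht.1, hmmem.2]⟩
        have houter := hgd (m - t) htm
        have hinner : HasDerivWithinAt (fun r : ℝ => m - r) (-1) (Icc (0:ℝ) m) t := by
          simpa using ((hasDerivAt_id t).const_sub m).hasDerivWithinAt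
        have := houter.comp t hinner
          (fun r hr => ⟨by simp; linarith [hr.2], by simp; linarith [hr.1, hmmem.2]⟩)
        simpa [Function.comp_def] using this)
      (fun t ht => hlow (m - t) ⟨by linarith [ht.2], by linarith [ht.1, hmθle]⟩)
      (fun t ht => (abs_le.1 (habs (m - t)
        ⟨by linarith [ht.2], by linarith [ht.1, hmmem.2]⟩)).2)
      (by
        intro t ht
        show |g' (m - t) * (-1)| ≤ Real.sqrt (1 - g (m - t) ^ 2)
        rw [mul_neg_one, abs_neg]
        exact hbnd (m - t) ⟨by linarith [ht.2], by linarith [ht.1, hmmem.2]⟩)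
      (by simpa using hgm)
    intro s hs
    have h := haux (m - s) ⟨by linarith [hs.2], by linarith [hs.1]⟩
    simp only [sub_sub_cancel, sub_zero] at h
    have hcos : Real.cos (m - s) = Real.cos (s - m) := by
      rw [← Real.cos_neg, neg_sub]
    linarith [hcos ▸ h]
  have key : ∀ s ∈ Icc (0:ℝ) θ, Real.cos (s - m) ≤ g s := by
    intro s hs
    rcases le_total s m with h | h
    · exact keyL s ⟨hs.1, h⟩
    · exact keyR s ⟨h, hs.2⟩
  -- integrate via MVT on F
  set F : ℝ → ℝ := (fun s => ⟪x s, u⟫ - Real.sin (s - m)) with hF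
  have hxc : ContinuousOn x (Icc (0:ℝ) π) := fun s hs => (hd1 s hs).continuousWithinAt
  have hFcont : ContinuousOn F (Icc (0:ℝ) θ) := by
    apply ContinuousOn.sub
    · exact (hxc.mono hsub).inner continuousOn_const
    · exact (Real.continuous_sin.comp (continuous_id.sub continuous_const)).continuousOn
  have hFd : ∀ s ∈ Ioo (0:ℝ) θ, HasDerivAt F (g s - Real.cos (s - m)) s := by
    intro s hso
    have hsΙ : s ∈ Icc (0:ℝ) π := ⟨hso.1.le, le_trans hso.2.le hθ.2⟩
    have hx : HasDerivAt x (x' s) s :=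
      (hd1 s hsΙ).hasDerivAt (Icc_mem_nhds hso.1 (lt_of_lt_of_le hso.2 hθ.2))
    have h1 : HasDerivAt (fun t => ⟪x t, u⟫) (g s) s := by
      have := hx.inner ℝ (hasDerivAt_const s u)
      simpa using this
    have h2 : HasDerivAt (fun t : ℝ => Real.sin (t - m)) (Real.cos (s - m)) s := by
      have := (Real.hasDerivAt_sin (s - m)).comp s ((hasDerivAt_id s).sub_const m)
      simpa [Function.comp_def] using this
    exact h1.sub h2
  obtain ⟨t, hto, hsl⟩ := exists_hasDerivAt_eq_slope F
    (fun s => g s - Real.cos (s - m)) hθpos hFcont hFd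
  have hFmono : F 0 ≤ F θ := by
    have h1 : 0 ≤ g t - Real.cos (t - m) := sub_nonneg.2 (key t ⟨hto.1.le, hto.2.le⟩)
    have h2 : 0 ≤ (F θ - F 0) / (θ - 0) := hsl ▸ h1
    have h3 := (le_div_iff₀ (by linarith : (0:ℝ) < θ - 0)).1 h2
    linarith [h3]
  -- assemble
  have hs1 : Real.sin (θ - m) = Real.sin (θ / 2) := by
    simp only [hm]; ring_nf
  have hs2 : Real.sin (0 - m) = -Real.sin (θ / 2) := by
    simp only [hm]; rw [zero_sub, Real.sin_neg]
  have hchord : 2 * Real.sin (θ / 2) ≤ ⟪x θ - x 0, u⟫ := by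
    have hsplit : ⟪x θ - x 0, u⟫ = ⟪x θ, u⟫ - ⟪x 0, u⟫ := inner_sub_left _ _ _
    simp only [hF] at hFmono
    rw [hsplit]
    linarith [hFmono, hs1, hs2]
  have hCS : ⟪x θ - x 0, u⟫ ≤ ‖x θ - x 0‖ := by
    calc ⟪x θ - x 0, u⟫ ≤ |⟪x θ - x 0, u⟫| := le_abs_self _
    _ ≤ ‖x θ - x 0‖ * ‖u‖ := abs_real_inner_le_norm _ _
    _ = ‖x θ - x 0‖ := by rw [hunorm, mul_one]
  have hsin_nonneg : 0 ≤ Real.sin (θ / 2) :=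
    Real.sin_nonneg_of_nonneg_of_le_pi (by linarith) (by linarith [hθ.2, Real.pi_pos])
  have hsqrt : Real.sqrt (2 - 2 * Real.cos θ) = 2 * Real.sin (θ / 2) := by
    have hc : Real.cos θ = 2 * Real.cos (θ / 2) ^ 2 - 1 := by
      rw [← Real.cos_two_mul]; ring_nf
    have hso := Real.sin_sq_add_cos_sq (θ / 2)
    have hid : 2 - 2 * Real.cos θ = (2 * Real.sin (θ / 2)) ^ 2 := by nlinarith
    rw [hid, Real.sqrt_sq (by linarith)]
  rw [ge_iff_le, hsqrt]
  linarith [hchord, hCS]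
end
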